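/- arXiv:1608.08475 — 4 statements merged into one kernel-verified Lean document; each statement's English description precedes it below -/
import Mathlib

section
/- Let h ∈ GL₂(ℚ_p) have rows (a, b) and (c, d). Then there exists N ∈ ℕ such that for all integers n₁, n₂ with n₁ − n₂ ≥ N, setting m = diag(p^{n₁}, p^{n₂}), one has F(m·h) = (n₁ − n₂) · Real.log p + Real.log( max(‖c‖, ‖d‖)² / ‖det h‖ ). -/
open Matrix

/-- The function `F(x) = log( max_{i,j} ‖x_{ij}‖² / ‖det x‖ )` on 2×2 matrices over `ℚ_[p]`. -/
noncomputable def F {p : ℕ} [Fact p.Prime] (x : Matrix (Fin 2) (Fin 2) ℚ_[p]) : ℝ :=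
  Real.log ((⨆ i : Fin 2, ⨆ j : Fin 2, ‖x i j‖ ^ 2) / ‖x.det‖)

lemma iSup_fin_two (f : Fin 2 → ℝ) : (⨆ i : Fin 2, f i) = max (f 0) (f 1) := by
  apply le_antisymm
  · refine ciSup_le fun i => ?_
    fin_cases i
    · exact le_max_left _ _
    · exact le_max_right _ _
  · exact max_le (le_ciSup (Set.Finite.bddAbove (Set.finite_range f)) 0)
      (le_ciSup (Set.Finite.bddAbove (Set.finite_range f)) 1)

lemma max_sq_eq (x y : ℝ) (hx : 0 ≤ x) (hy : 0 ≤ y) :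
    max (x ^ 2) (y ^ 2) = (max x y) ^ 2 := by
  rcases le_total x y with hxy | hxy
  · rw [max_eq_right hxy, max_eq_right (pow_le_pow_left₀ hx hxy 2)]
  · rw [max_eq_left hxy, max_eq_left (pow_le_pow_left₀ hy hxy 2)]

theorem stmt2 (p : ℕ) [Fact p.Prime] (h : GL (Fin 2) ℚ_[p]) :
    ∃ N : ℕ, ∀ n₁ n₂ : ℤ, (N : ℤ) ≤ n₁ - n₂ →
      F (Matrix.diagonal ![(p : ℚ_[p]) ^ n₁, (p : ℚ_[p]) ^ n₂] *
          (↑h : Matrix (Fin 2) (Fin 2) ℚ_[p])) =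
        ((n₁ - n₂ : ℤ) : ℝ) * Real.log p +
          Real.log
            ((max ‖(↑h : Matrix (Fin 2) (Fin 2) ℚ_[p]) 1 0‖
                  ‖(↑h : Matrix (Fin 2) (Fin 2) ℚ_[p]) 1 1‖) ^ 2 /
              ‖(↑h : Matrix (Fin 2) (Fin 2) ℚ_[p]).det‖) := by
  set H : Matrix (Fin 2) (Fin 2) ℚ_[p] := (↑h : Matrix (Fin 2) (Fin 2) ℚ_[p]) with hH
  have hp1 : (1 : ℝ) < (p : ℝ) := by
    exact_mod_cast (Fact.out : p.Prime).one_lt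
  have hp0 : (0 : ℝ) < (p : ℝ) := lt_trans one_pos hp1
  -- determinant is nonzero
  have hdet : H.det ≠ 0 := by
    have : IsUnit H.det := (Matrix.isUnit_iff_isUnit_det H).mp h.isUnit
    exact this.ne_zero
  have hdetnorm : (0 : ℝ) < ‖H.det‖ := norm_pos_iff.mpr hdet
  -- the bottom row is nonzero
  have hCD : (0 : ℝ) < max ‖H 1 0‖ ‖H 1 1‖ := by
    rcases lt_or_ge 0 (max ‖H 1 0‖ ‖H 1 1‖) with h' | h'
    · exact h'
    · exfalso
      have h10 : ‖H 1 0‖ = 0 := le_antisymm (le_trans (le_max_left _ _) h') (norm_nonneg _)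
      have h11 : ‖H 1 1‖ = 0 := le_antisymm (le_trans (le_max_right _ _) h') (norm_nonneg _)
      apply hdet
      rw [Matrix.det_fin_two, norm_eq_zero.mp h10, norm_eq_zero.mp h11]
      ring
  set A : ℝ := ‖H 0 0‖
  set B : ℝ := ‖H 0 1‖
  set C : ℝ := ‖H 1 0‖
  set D : ℝ := ‖H 1 1‖
  obtain ⟨N, hN⟩ : ∃ N : ℕ, max A B / max C D < (p : ℝ) ^ N :=
    pow_unbounded_of_one_lt _ hp1
  refine ⟨N, fun n₁ n₂ hn => ?_⟩
  have key : (p : ℝ) ^ (-n₁) * max A B ≤ (p : ℝ) ^ (-n₂) * max C D := by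
    have h1 : max A B ≤ (p : ℝ) ^ (N : ℤ) * max C D := by
      rw [div_lt_iff₀ hCD] at hN
      rw [zpow_natCast]
      exact hN.le
    have h2 : ((p : ℝ) ^ (N : ℤ)) ≤ (p : ℝ) ^ (n₁ - n₂) :=
      zpow_le_zpow_right₀ hp1.le hn
    calc (p : ℝ) ^ (-n₁) * max A B ≤ (p : ℝ) ^ (-n₁) * ((p : ℝ) ^ (n₁ - n₂) * max C D) := by
          apply mul_le_mul_of_nonneg_left _ (zpow_nonneg hp0.le _)
          exact h1.trans (mul_le_mul_of_nonneg_right h2 hCD.le)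
      _ = (p : ℝ) ^ (-n₂) * max C D := by
          rw [← mul_assoc, ← zpow_add₀ (ne_of_gt hp0)]
          ring_nf
  -- compute the matrix entries
  set v : Fin 2 → ℚ_[p] := ![(p : ℚ_[p]) ^ n₁, (p : ℚ_[p]) ^ n₂] with hv
  set M : Matrix (Fin 2) (Fin 2) ℚ_[p] := Matrix.diagonal v * H with hM
  have hMe : ∀ i j, M i j = v i * H i j := fun i j => Matrix.diagonal_mul v H i j
  have hv0 : ‖v 0‖ = (p : ℝ) ^ (-n₁) := by
    simp only [hv, Matrix.cons_val_zero]; exact Padic.norm_p_zpow n₁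
  have hv1 : ‖v 1‖ = (p : ℝ) ^ (-n₂) := by
    simp only [hv, Matrix.cons_val_one, Matrix.head_cons]; exact Padic.norm_p_zpow n₂
  -- compute the sup
  have hsup : (⨆ i : Fin 2, ⨆ j : Fin 2, ‖M i j‖ ^ 2) =
      ((p : ℝ) ^ (-n₂) * max C D) ^ 2 := by
    rw [iSup_fin_two fun i => ⨆ j : Fin 2, ‖M i j‖ ^ 2,
      iSup_fin_two fun j => ‖M 0 j‖ ^ 2, iSup_fin_two fun j => ‖M 1 j‖ ^ 2]
    simp only [hMe, norm_mul, hv0, hv1]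
    rw [max_sq_eq _ _ (by positivity) (by positivity),
        max_sq_eq _ _ (by positivity) (by positivity),
        ← mul_max_of_nonneg _ _ (zpow_nonneg hp0.le (-n₁)),
        ← mul_max_of_nonneg _ _ (zpow_nonneg hp0.le (-n₂))]
    rw [max_sq_eq _ _ (by positivity) (by positivity)]
    congr 1
    exact max_eq_right key
  -- compute the determinant
  have hdetM : ‖M.det‖ = (p : ℝ) ^ (-n₁) * ((p : ℝ) ^ (-n₂) * ‖H.det‖) := by
    rw [hM, Matrix.det_mul, Matrix.det_diagonal]
    simp only [Fin.prod_univ_two, hv, Matrix.cons_val_zero, Matrix.cons_val_one,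
      Matrix.head_cons]
    rw [norm_mul, norm_mul, Padic.norm_p_zpow, Padic.norm_p_zpow, mul_assoc]
  -- put it together
  have hq1 : (p : ℝ) ^ (-n₁) ≠ 0 := ne_of_gt (zpow_pos hp0 _)
  have hq2 : (p : ℝ) ^ (-n₂) ≠ 0 := ne_of_gt (zpow_pos hp0 _)
  have ht : (0 : ℝ) < (p : ℝ) ^ (-n₂) * max C D := mul_pos (zpow_pos hp0 _) hCD
  rw [F, hsup, hdetM]
  rw [Real.log_div (by positivity) (by positivity),
    Real.log_pow, Real.log_mul hq2 (ne_of_gt hCD),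
    Real.log_mul hq1 (by positivity), Real.log_mul hq2 (ne_of_gt hdetnorm),
    Real.log_div (by positivity) (ne_of_gt hdetnorm), Real.log_pow,
    Real.log_zpow, Real.log_zpow]
  push_cast
  ring
end

section
/- (Lemma on Cartan projections, matrix form.) Let Ω be a compact subset of GL₂(ℚ_p). Then there exists N₀ > 0 satisfying: for every h ∈ Ω there exists X_h ∈ ℝ such that for all integers n₁, n₂ with n₁ − n₂ ≥ N₀, setting m = diag(p^{n₁}, p^{n₂}), one has F(m·h) = (n₁ − n₂) · Real.log p + X_h. -/
/-! Left multiplication by `diag(p^n₁, p^n₂)` scales the rows of `h` by `p^(-n₁)` and `p^(-n₂)`.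
Once `n₁ - n₂` is large the second row dominates, so `F` only sees the second row and the
determinant, and both scale by explicit powers of `p`. Compactness of `Ω` bounds the ratio of
the row norms uniformly, which gives a uniform threshold `N₀`. -/

open Matrix

theorem iSup_norm_sq_eq_norm_sq {ι E : Type*} [Fintype ι] [Nonempty ι]
    [SeminormedAddCommGroup E] (v : ι → E) : ⨆ i, ‖v i‖ ^ 2 = ‖v‖ ^ 2 := by
  obtain ⟨i, -, hi⟩ :=
    Finset.exists_mem_eq_sup (Finset.univ : Finset ι) Finset.univ_nonempty fun i => ‖v i‖₊
  have hv : ‖v‖ = ‖v i‖ := by rw [Pi.norm_def, hi]; rfl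
  refine le_antisymm (ciSup_le fun j => by gcongr; exact norm_le_pi_norm v j) ?_
  rw [hv]
  exact le_ciSup (f := fun i => ‖v i‖ ^ 2) (Set.finite_range _).bddAbove i

theorem Matrix.norm_diagonal_mul_row {m n 𝕜 : Type*} [Fintype m] [DecidableEq m] [Fintype n]
    [NormedField 𝕜] (d : m → 𝕜) (M : Matrix m n 𝕜) (i : m) :
    ‖(diagonal d * M) i‖ = ‖d i‖ * ‖M i‖ := by
  rw [← norm_smul]
  congr 1
  ext j
  simp [diagonal_mul]

theorem Matrix.norm_row_ne_zero_of_det_ne_zero {n 𝕜 : Type*} [Fintype n] [DecidableEq n]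
    [NormedField 𝕜] {M : Matrix n n 𝕜} (hM : M.det ≠ 0) (i : n) : ‖M i‖ ≠ 0 :=
  norm_ne_zero_iff.2 fun hi => hM (det_eq_zero_of_row_eq_zero i fun j => congrFun hi j)

theorem IsCompact.exists_norm_row_le_mul_norm_row {n 𝕜 : Type*} [Fintype n] [DecidableEq n]
    [NormedField 𝕜] {Ω : Set (GL n 𝕜)} (hΩ : IsCompact Ω) (i j : n) :
    ∃ C, ∀ h ∈ Ω, ‖(h : Matrix n n 𝕜) i‖ ≤ C * ‖(h : Matrix n n 𝕜) j‖ := by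
  have hrow : ∀ h : GL n 𝕜, 0 < ‖(h : Matrix n n 𝕜) j‖ := fun h =>
    (norm_nonneg _).lt_of_ne' (norm_row_ne_zero_of_det_ne_zero h.det_ne_zero j)
  have hval : Continuous ((↑) : GL n 𝕜 → Matrix n n 𝕜) := Units.continuous_val
  have hcont : Continuous fun h : GL n 𝕜 => ‖(h : Matrix n n 𝕜) i‖ / ‖(h : Matrix n n 𝕜) j‖ :=
    ((continuous_apply i).comp hval).norm.div ((continuous_apply j).comp hval).norm
      fun h => (hrow h).ne'
  obtain ⟨C, hC⟩ := hΩ.bddAbove_image hcont.continuousOn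
  exact ⟨C, fun h hh => (div_le_iff₀ (hrow h)).1 (hC ⟨h, hh, rfl⟩)⟩

theorem F_eq_of_norm_row_le {p : ℕ} [Fact p.Prime] (x : Matrix (Fin 2) (Fin 2) ℚ_[p])
    (hx : ‖x 0‖ ≤ ‖x 1‖) : F x = Real.log (‖x 1‖ ^ 2 / ‖x.det‖) := by
  have hsup : ⨆ i, ‖x i‖ ^ 2 = ‖x 1‖ ^ 2 :=
    le_antisymm (ciSup_le <| Fin.forall_fin_two.2 ⟨by gcongr, le_rfl⟩)
      (le_ciSup (f := fun i => ‖x i‖ ^ 2) (Set.finite_range _).bddAbove 1)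
  simp only [F, iSup_norm_sq_eq_norm_sq, hsup]

theorem F_diagonal_zpow_mul {p : ℕ} [Fact p.Prime] (n₁ n₂ : ℤ)
    (h : Matrix (Fin 2) (Fin 2) ℚ_[p]) (hdet : h.det ≠ 0)
    (hrows : ‖h 0‖ ≤ (p : ℝ) ^ (n₁ - n₂) * ‖h 1‖) :
    F (diagonal ![(p : ℚ_[p]) ^ n₁, (p : ℚ_[p]) ^ n₂] * h) =
      ((n₁ - n₂ : ℤ) : ℝ) * Real.log p + Real.log (‖h 1‖ ^ 2 / ‖h.det‖) := by
  have hp : (0 : ℝ) < p := by exact_mod_cast (Fact.out : p.Prime).pos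
  have h1 : ‖h 1‖ ≠ 0 := norm_row_ne_zero_of_det_ne_zero hdet 1
  have hpow : (p : ℝ) ^ (-n₁) * (p : ℝ) ^ (n₁ - n₂) = (p : ℝ) ^ (-n₂) := by
    rw [← zpow_add₀ hp.ne']; ring_nf
  rw [F_eq_of_norm_row_le]
  · have hratio : ((p : ℝ) ^ (-n₂) * ‖h 1‖) ^ 2 / ((p : ℝ) ^ (-n₁) * (p : ℝ) ^ (-n₂) * ‖h.det‖) =
        (p : ℝ) ^ (n₁ - n₂) * (‖h 1‖ ^ 2 / ‖h.det‖) := by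
      rw [← hpow]
      field_simp
    rw [norm_diagonal_mul_row, det_mul, det_diagonal, Fin.prod_univ_two, norm_mul, norm_mul]
    simp only [cons_val_zero, cons_val_one, Padic.norm_p_zpow]
    rw [hratio, Real.log_mul (by positivity) (by positivity), Real.log_zpow]
  · simp only [norm_diagonal_mul_row, cons_val_zero, cons_val_one, Padic.norm_p_zpow]
    calc (p : ℝ) ^ (-n₁) * ‖h 0‖ ≤ (p : ℝ) ^ (-n₁) * ((p : ℝ) ^ (n₁ - n₂) * ‖h 1‖) := by gcongr
      _ = (p : ℝ) ^ (-n₂) * ‖h 1‖ := by rw [← mul_assoc, hpow]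

theorem stmt3 (p : ℕ) [Fact p.Prime] (Ω : Set (GL (Fin 2) ℚ_[p])) (hΩ : IsCompact Ω) :
    ∃ N₀ : ℝ, 0 < N₀ ∧ ∀ h ∈ Ω, ∃ X : ℝ, ∀ n₁ n₂ : ℤ, N₀ ≤ ((n₁ - n₂ : ℤ) : ℝ) →
      F (Matrix.diagonal ![(p : ℚ_[p]) ^ n₁, (p : ℚ_[p]) ^ n₂] *
          (↑h : Matrix (Fin 2) (Fin 2) ℚ_[p])) =
        ((n₁ - n₂ : ℤ) : ℝ) * Real.log p + X := by
  have hp : (1 : ℝ) < p := by exact_mod_cast (Fact.out : p.Prime).one_lt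
  obtain ⟨C, hC⟩ := hΩ.exists_norm_row_le_mul_norm_row 0 1
  obtain ⟨N, hN⟩ := pow_unbounded_of_one_lt C hp
  refine ⟨N + 1, by positivity, fun h hh => ?_⟩
  set g : Matrix (Fin 2) (Fin 2) ℚ_[p] := ↑h
  refine ⟨Real.log (‖g 1‖ ^ 2 / ‖g.det‖), fun n₁ n₂ hn =>
    F_diagonal_zpow_mul n₁ n₂ g h.det_ne_zero ?_⟩
  have hNn : (N : ℤ) ≤ n₁ - n₂ := by
    exact_mod_cast (le_add_of_nonneg_right zero_le_one).trans hn
  calc ‖g 0‖ ≤ C * ‖g 1‖ := hC h hh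
    _ ≤ (p : ℝ) ^ (N : ℤ) * ‖g 1‖ := by rw [zpow_natCast]; gcongr
    _ ≤ (p : ℝ) ^ (n₁ - n₂) * ‖g 1‖ := by gcongr; exact hp.le
end

section
/- (Computation of the weight function v_M.) Let q > 1 be a real number, let n ∈ ℕ and a, b ∈ ℝ. Then the function λ ↦ q^{λ(n+a)}·(1 + q^{−λ})/(1 − q^{−2λ}) + q^{λ(−n+b)}·(1 + q^{λ})/(1 − q^{2λ}), defined for real λ ≠ 0, tends to 2n + 1 + a − b as λ → 0 with λ ≠ 0. -/
/-!
Writing `u = q ^ λ`, the identities `(1 + u⁻¹) / (1 - u⁻²) = -u / (1 - u)` and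
`(1 + u) / (1 - u²) = 1 / (1 - u)` turn the expression into
`(q ^ (λ (b - n)) - q ^ (λ (n + a + 1))) / (1 - q ^ λ)`, a quotient of two functions vanishing
at `0`. Dividing numerator and denominator by `λ`, the limit is the ratio of the derivatives at
`0`, namely `((b - n) - (n + a + 1)) log q / (-log q)`.
-/

open Filter Topology Real

lemma tendsto_rpow_mul_sub_one_div {q : ℝ} (hq : 0 < q) (c : ℝ) :
    Tendsto (fun lam : ℝ => (q ^ (lam * c) - 1) / lam) (𝓝[≠] 0) (𝓝 (log q * c)) := by
  have hderiv : HasDerivAt (fun lam : ℝ => q ^ (lam * c)) (log q * c) 0 := by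
    simpa using ((hasDerivAt_id (0 : ℝ)).mul_const c).const_rpow hq
  refine (hasDerivAt_iff_tendsto_slope.mp hderiv).congr fun lam => ?_
  simp [slope_def_field]

lemma tendsto_rpow_mul_sub_rpow_mul_div_one_sub_rpow {q : ℝ} (hq : 0 < q) (hq1 : q ≠ 1)
    (c d : ℝ) :
    Tendsto (fun lam : ℝ => (q ^ (lam * d) - q ^ (lam * c)) / (1 - q ^ lam)) (𝓝[≠] 0)
      (𝓝 (c - d)) := by
  have hlog : log q ≠ 0 := log_ne_zero_of_pos_of_ne_one hq hq1
  have hratio := ((tendsto_rpow_mul_sub_one_div hq d).sub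
    (tendsto_rpow_mul_sub_one_div hq c)).div (tendsto_rpow_mul_sub_one_div hq 1).neg
    (by simpa using hlog)
  have hlim : (log q * d - log q * c) / -(log q * 1) = c - d := by
    field_simp
    ring
  rw [hlim] at hratio
  refine hratio.congr' ?_
  filter_upwards [self_mem_nhdsWithin] with lam hlam
  simp only [Pi.div_apply]
  rw [← sub_div, ← neg_div, div_div_div_cancel_right₀ hlam, mul_one]
  ring

lemma rpow_mul_one_add_div_add_rpow_mul_one_add_div {q : ℝ} (hq : 0 < q) (hq1 : q ≠ 1)
    {lam : ℝ} (hlam : lam ≠ 0) (c d : ℝ) :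
    q ^ (lam * c) * (1 + q ^ (-lam)) / (1 - q ^ (-(2 * lam))) +
        q ^ (lam * d) * (1 + q ^ lam) / (1 - q ^ (2 * lam)) =
      (q ^ (lam * d) - q ^ (lam * (c + 1))) / (1 - q ^ lam) := by
  set u := q ^ lam with hu
  have hu0 : 0 < u := rpow_pos_of_pos hq lam
  have hu1 : u ≠ 1 := by
    rw [hu, rpow_def_of_pos hq, Ne, exp_eq_one_iff]
    exact mul_ne_zero (log_ne_zero_of_pos_of_ne_one hq hq1) hlam
  have hinv : q ^ (-lam) = u⁻¹ := rpow_neg hq.le lam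
  have hsq : q ^ (2 * lam) = u ^ 2 := by rw [two_mul, rpow_add hq, sq]
  have hsq_inv : q ^ (-(2 * lam)) = (u ^ 2)⁻¹ := by rw [rpow_neg hq.le, hsq]
  have hshift : q ^ (lam * (c + 1)) = q ^ (lam * c) * u := by
    rw [hu, ← rpow_add hq, mul_add_one]
  have hsq_ne : u ^ 2 - 1 ≠ 0 := by
    rw [sub_ne_zero, Ne, pow_eq_one_iff_of_nonneg hu0.le two_ne_zero]
    exact hu1
  have hsq_ne' : 1 - u ^ 2 ≠ 0 := by rwa [← neg_sub, neg_ne_zero]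
  rw [hinv, hsq, hsq_inv, hshift]
  field_simp
  ring

theorem stmt5 (q : ℝ) (hq : 1 < q) (n : ℕ) (a b : ℝ) :
    Filter.Tendsto
      (fun lam : ℝ =>
        q ^ (lam * ((n : ℝ) + a)) * (1 + q ^ (-lam)) / (1 - q ^ (-(2 * lam))) +
          q ^ (lam * (-(n : ℝ) + b)) * (1 + q ^ lam) / (1 - q ^ (2 * lam)))
      (nhdsWithin (0 : ℝ) {0}ᶜ) (nhds (2 * (n : ℝ) + 1 + a - b)) := by
  have hq0 : 0 < q := one_pos.trans hq
  have hlim := tendsto_rpow_mul_sub_rpow_mul_div_one_sub_rpow hq0 hq.ne' ((n : ℝ) + a + 1)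
    (-(n : ℝ) + b)
  rw [show (n : ℝ) + a + 1 - (-(n : ℝ) + b) = 2 * (n : ℝ) + 1 + a - b by ring] at hlim
  refine hlim.congr' ?_
  filter_upwards [self_mem_nhdsWithin] with lam hlam
  exact (rpow_mul_one_add_div_add_rpow_mul_one_add_div hq0 hq.ne' hlam _ _).symm
end

section
/- (Asymptotics of the inner-contour integral with a double pole at 1.) Let 0 < r₀ < r < 1 < R₀ and let h : ℂ → ℂ be complex differentiable on the annulus {z : r₀ < |z| < R₀}. Then ∮_{|z|=r} z^{−m} h(z)/(z − 1)² dz − 2πi·( m·h(1) − h′(1) ) tends to 0 as m → ∞ (m ∈ ℕ), where h′(1) is the complex derivative of h at 1. -/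
/-!
Subtracting the principal part `q c / (z - c)² + q'(c) / (z - c)` of `q z / (z - c)²` at `c`
leaves `dslope (dslope q c) c`, which is holomorphic on the annulus, so its integrals over the
two boundary circles agree. The principal part integrates to `2πi q'(c)` over the outer circle and
to `0` over the inner one. With `q z = z⁻ᵐ h z` and `c = 1` this gives
`∮_{|z|=r} = ∮_{|z|=R} + 2πi (m h(1) - h'(1))` for any `1 < R < R₀`, and the outer integral is
`O(R⁻ᵐ)`.
-/

open Complex Metric Set Filter Topology Real

theorem div_sub_sq_eq_dslope_dslope_add {q : ℂ → ℂ} {c z : ℂ} (hz : z ≠ c) :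
    q z / (z - c) ^ 2 =
      dslope (dslope q c) c z + deriv q c * (z - c)⁻¹ + q c * (z - c) ^ (-2 : ℤ) := by
  have hzc : z - c ≠ 0 := sub_ne_zero.2 hz
  rw [dslope_of_ne _ hz, slope_def_field, dslope_of_ne _ hz, slope_def_field, dslope_same,
    zpow_neg, zpow_ofNat]
  field_simp
  ring

theorem circleIntegral_sub_inv_of_notMem_closedBall {w c : ℂ} {r : ℝ} (hr : 0 ≤ r)
    (hc : c ∉ closedBall w r) : (∮ z in C(w, r), (z - c)⁻¹) = 0 := by
  have hd : ∀ z ∈ closedBall w r, DifferentiableAt ℂ (fun z ↦ (z - c)⁻¹) z := fun z hz ↦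
    (differentiableAt_id.sub_const c).inv (sub_ne_zero.2 (ne_of_mem_of_not_mem hz hc))
  exact circleIntegral_eq_zero_of_differentiable_on_off_countable hr countable_empty
    (fun z hz ↦ (hd z hz).continuousAt.continuousWithinAt)
    (fun z hz ↦ hd z (ball_subset_closedBall hz.1))

theorem circleIntegral_div_sub_sq_eq_dslope_dslope_add {q : ℂ → ℂ} {w c : ℂ} {s : ℝ}
    (hs : 0 ≤ s) (hc : c ∉ sphere w s) (hg : ContinuousOn (dslope (dslope q c) c) (sphere w s)) :
    (∮ z in C(w, s), q z / (z - c) ^ 2) =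
      (∮ z in C(w, s), dslope (dslope q c) c z) + deriv q c * ∮ z in C(w, s), (z - c)⁻¹ := by
  have hcs : c ∉ sphere w |s| := by rwa [abs_of_nonneg hs]
  have hinv : CircleIntegrable (fun z ↦ deriv q c * (z - c)⁻¹) w s :=
    (circleIntegrable_sub_inv_iff.2 (Or.inr hcs)).const_mul _
  have hzpow : CircleIntegrable (fun z ↦ q c * (z - c) ^ (-2 : ℤ)) w s :=
    (circleIntegrable_sub_zpow_iff.2 (Or.inr (Or.inr hcs))).const_mul _
  rw [circleIntegral.integral_congr hs fun z hz ↦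
      div_sub_sq_eq_dslope_dslope_add (ne_of_mem_of_not_mem hz hc),
    circleIntegral.integral_add (f := fun z ↦ dslope (dslope q c) c z + deriv q c * (z - c)⁻¹)
      ((hg.circleIntegrable hs).add hinv) hzpow,
    circleIntegral.integral_add (hg.circleIntegrable hs) hinv,
    circleIntegral.integral_const_mul, circleIntegral.integral_const_mul,
    circleIntegral.integral_sub_zpow_of_ne (by decide), mul_zero, add_zero]

theorem closedBall_sdiff_ball_mem_nhds {w z : ℂ} {r R : ℝ} (hz : z ∈ ball w R \ closedBall w r) :
    closedBall w R \ ball w r ∈ 𝓝 z :=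
  mem_of_superset ((isOpen_ball.sdiff isClosed_closedBall).mem_nhds hz)
    (sdiff_subset_sdiff ball_subset_closedBall ball_subset_closedBall)

theorem circleIntegral_div_sub_sq_of_mem_annulus {q : ℂ → ℂ} {w c : ℂ} {r R : ℝ} (hr : 0 < r)
    (hc : c ∈ ball w R \ closedBall w r)
    (hq : DifferentiableOn ℂ q (closedBall w R \ ball w r)) :
    (∮ z in C(w, R), q z / (z - c) ^ 2) =
      (∮ z in C(w, r), q z / (z - c) ^ 2) + 2 * π * I * deriv q c := by
  have hrR : r ≤ R := ((not_le.1 hc.2).trans hc.1).le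
  have hA := closedBall_sdiff_ball_mem_nhds hc
  have hg : DifferentiableOn ℂ (dslope (dslope q c) c) (closedBall w R \ ball w r) :=
    (differentiableOn_dslope hA).2 ((differentiableOn_dslope hA).2 hq)
  have hsph {s : ℝ} (hrs : r ≤ s) (hsR : s ≤ R) : sphere w s ⊆ closedBall w R \ ball w r :=
    fun z hz ↦ ⟨mem_closedBall.2 ((mem_sphere.1 hz).trans_le hsR),
      fun h ↦ (mem_ball.1 h).not_ge ((mem_sphere.1 hz).symm ▸ hrs)⟩
  have hcR : c ∉ sphere w R := fun h ↦ (mem_ball.1 hc.1).ne (mem_sphere.1 h)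
  have hcr : c ∉ sphere w r := fun h ↦ hc.2 (sphere_subset_closedBall h)
  rw [circleIntegral_div_sub_sq_eq_dslope_dslope_add (hr.le.trans hrR) hcR
      (hg.continuousOn.mono (hsph hrR le_rfl)),
    circleIntegral_div_sub_sq_eq_dslope_dslope_add hr.le hcr
      (hg.continuousOn.mono (hsph le_rfl hrR)),
    circleIntegral.integral_sub_inv_of_mem_ball hc.1,
    circleIntegral_sub_inv_of_notMem_closedBall hr.le hc.2,
    circleIntegral_eq_of_differentiable_on_annulus_off_countable hr hrR countable_empty
      hg.continuousOn fun z hz ↦ hg.differentiableAt (closedBall_sdiff_ball_mem_nhds hz.1)]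
  ring

theorem tendsto_circleIntegral_zpow_neg_mul {f : ℂ → ℂ} {R : ℝ} (hR : 1 < R)
    (hf : ContinuousOn f (sphere 0 R)) :
    Tendsto (fun m : ℕ ↦ ∮ z in C(0, R), z ^ (-(m : ℤ)) * f z) atTop (𝓝 0) := by
  have hR0 : 0 < R := one_pos.trans hR
  obtain ⟨C, hC⟩ := (isCompact_sphere (0 : ℂ) R).exists_bound_of_continuousOn hf
  have hbound (m : ℕ) : ‖∮ z in C(0, R), z ^ (-(m : ℤ)) * f z‖ ≤ 2 * π * R * (R⁻¹ ^ m * C) := by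
    refine circleIntegral.norm_integral_le_of_norm_le_const hR0.le fun z hz ↦ ?_
    rw [norm_mul, norm_zpow, mem_sphere_zero_iff_norm.1 hz, zpow_neg, zpow_natCast, ← inv_pow]
    exact mul_le_mul_of_nonneg_left (hC z hz) (by positivity)
  have hgeom : Tendsto (fun m : ℕ ↦ R⁻¹ ^ m) atTop (𝓝 0) :=
    tendsto_pow_atTop_nhds_zero_of_lt_one (inv_nonneg.2 hR0.le) (inv_lt_one_of_one_lt₀ hR)
  refine squeeze_zero_norm hbound ?_
  simpa using (hgeom.mul_const C).const_mul (2 * π * R)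

theorem circleIntegral_zpow_neg_mul_div_sub_one_sq_sub_eq {h : ℂ → ℂ} {r R : ℝ} (hr : 0 < r)
    (hr1 : r < 1) (hR1 : 1 < R) (hh : DifferentiableOn ℂ h (closedBall 0 R \ ball 0 r)) (m : ℕ) :
    (∮ z in C(0, r), z ^ (-(m : ℤ)) * h z / (z - 1) ^ 2) -
      2 * π * I * ((m : ℂ) * h 1 - deriv h 1) =
      ∮ z in C(0, R), z ^ (-(m : ℤ)) * (h z / (z - 1) ^ 2) := by
  have hone : (1 : ℂ) ∈ ball 0 R \ closedBall 0 r := by simp [hr1, hR1]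
  have hq : DifferentiableOn ℂ (fun z ↦ z ^ (-(m : ℤ)) * h z) (closedBall 0 R \ ball 0 r) :=
    fun z hz ↦
      have hz0 : z ≠ 0 := fun h0 ↦ hz.2 (h0 ▸ mem_ball_self hr)
      (differentiableAt_zpow.2 (Or.inl hz0)).differentiableWithinAt.mul (hh z hz)
  have hderiv : deriv (fun z ↦ z ^ (-(m : ℤ)) * h z) 1 = -m * h 1 + deriv h 1 := by
    rw [deriv_fun_mul (differentiableAt_zpow.2 (Or.inl one_ne_zero))
      (hh.differentiableAt (closedBall_sdiff_ball_mem_nhds hone)), deriv_zpow]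
    simp
  simp_rw [← mul_div_assoc]
  rw [circleIntegral_div_sub_sq_of_mem_annulus hr hone hq, hderiv]
  ring

theorem stmt10 (r₀ r R₀ : ℝ) (h0 : 0 < r₀) (h1 : r₀ < r) (h2 : r < 1) (h3 : 1 < R₀)
    (h : ℂ → ℂ)
    (hh : DifferentiableOn ℂ h {z : ℂ | r₀ < ‖z‖ ∧ ‖z‖ < R₀}) :
    Filter.Tendsto
      (fun m : ℕ =>
        (∮ z in C(0, r), z ^ (-(m : ℤ)) * h z / (z - 1) ^ 2) -
          2 * Real.pi * Complex.I * ((m : ℂ) * h 1 - deriv h 1))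
      Filter.atTop (nhds 0) := by
  obtain ⟨R, hR1, hRR₀⟩ := exists_between h3
  have hannulus : closedBall 0 R \ ball 0 r ⊆ {z : ℂ | r₀ < ‖z‖ ∧ ‖z‖ < R₀} := fun z hz ↦ by
    simp only [Set.mem_sdiff, mem_closedBall_zero_iff, mem_ball_zero_iff, not_lt] at hz
    exact ⟨h1.trans_le hz.2, hz.1.trans_lt hRR₀⟩
  simp_rw [circleIntegral_zpow_neg_mul_div_sub_one_sq_sub_eq (h0.trans h1) h2 hR1 (hh.mono hannulus)]
  refine tendsto_circleIntegral_zpow_neg_mul hR1 ((hh.continuousOn.mono ?_).div (by fun_prop) ?_)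
  · intro z hz
    rw [mem_sphere_zero_iff_norm] at hz
    exact ⟨by linarith, by linarith⟩
  · intro z hz
    refine pow_ne_zero 2 (sub_ne_zero.2 fun hz1 ↦ ?_)
    rw [mem_sphere_zero_iff_norm, hz1, norm_one] at hz
    exact hR1.ne hz
end
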